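/- Fix κ > 0, T > 0 and θ > 0. For each integer N ≥ 1 let ε₀^{(N)}, …, ε_N^{(N)} be i.i.d. standard Gaussian random variables independent of (W₁, W₂), and set Y_n^{(N)} = y(n T / N) + θ ε_n^{(N)}. Then the expectation of the quadratic-variation estimator applied to the noisy observations diverges in the fine-sampling limit: E[ (1/(2 N (T/N))) Σ_{n=0}^{N−1} (Y_{n+1}^{(N)} − Y_n^{(N)})² ] = E[K_{N,T/N}] + θ² N / T, and this quantity tends to +∞ as N → ∞. -/

import Mathlib

open MeasureTheory ProbabilityTheory Real Filter

/-- `W` is a standard one-dimensional Brownian motion on the probability space `(Ω, P)`: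
an (a.s.) continuous process with `W 0 = 0`, independent increments, and Gaussian
increments `W t - W s ~ N(0, t - s)` for `0 ≤ s ≤ t`. -/
structure IsStdBM {Ω : Type} [MeasurableSpace Ω] (P : Measure Ω) (W : ℝ → Ω → ℝ) : Prop where
  meas : ∀ t : ℝ, Measurable (W t)
  cont : ∀ᵐ ω ∂P, Continuous fun t => W t ω
  init : ∀ᵐ ω ∂P, W 0 ω = 0
  indepIncr : ∀ (n : ℕ) (t : Fin (n + 1) → ℝ), Monotone t →
    iIndepFun
      (fun i : Fin n => fun ω => W (t i.succ) ω - W (t i.castSucc) ω) P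
  gaussIncr : ∀ s t : ℝ, 0 ≤ s → s ≤ t →
    P.map (fun ω => W t ω - W s ω) = gaussianReal 0 (Real.toNNReal (t - s))

/-- The σ-algebras generated by the two processes `W₁` and `W₂` are independent. -/
def ProcIndep {Ω : Type} [MeasurableSpace Ω] (P : Measure Ω) (W₁ W₂ : ℝ → Ω → ℝ) : Prop :=
  Indep (⨆ t : ℝ, MeasurableSpace.comap (W₁ t) inferInstance)
        (⨆ t : ℝ, MeasurableSpace.comap (W₂ t) inferInstance) P

/-- The Lagrangian displacement along the shear direction of the flow `v(x₁,x₂) = (0, sin x₁)`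
started at the origin: `y(t) = ∫₀ᵗ sin(√(2κ) W₁(s)) ds + √(2κ) W₂(t)`. -/
noncomputable def disp {Ω : Type} (κ : ℝ) (W₁ W₂ : ℝ → Ω → ℝ) (t : ℝ) (ω : Ω) : ℝ :=
  (∫ s in (0:ℝ)..t, Real.sin (Real.sqrt (2 * κ) * W₁ s ω)) + Real.sqrt (2 * κ) * W₂ t ω

/-- The quadratic-variation estimator
`K_{N,δ} = (1/(2Nδ)) Σ_{n=0}^{N−1} (y((n+1)δ) − y(nδ))²`. -/
noncomputable def qv {Ω : Type} (κ : ℝ) (W₁ W₂ : ℝ → Ω → ℝ) (N : ℕ) (δ : ℝ) (ω : Ω) : ℝ :=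
  (1 / (2 * N * δ)) * ∑ n ∈ Finset.range N,
    (disp κ W₁ W₂ ((n + 1) * δ) ω - disp κ W₁ W₂ (n * δ) ω) ^ 2

/-- The expectation of the quadratic-variation estimator applied to the noisy observations
`Y_n^{(N)} = y(n T/N) + θ ε_n^{(N)}` at sampling interval `δ = T/N`. -/
noncomputable def noisyQVMean {Ω : Type} [MeasurableSpace Ω] (P : Measure Ω)
    (W₁ W₂ : ℝ → Ω → ℝ) (κ T θ : ℝ) (ε : (N : ℕ) → Fin (N + 1) → Ω → ℝ) (N : ℕ) : ℝ :=
  ∫ ω, (1 / (2 * N * (T / N))) * ∑ n : Fin N,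
      ((disp κ W₁ W₂ ((n.succ : ℕ) * (T / N)) ω + θ * ε N n.succ ω)
        - (disp κ W₁ W₂ ((n.castSucc : ℕ) * (T / N)) ω + θ * ε N n.castSucc ω)) ^ 2 ∂P

open scoped NNReal Topology

/-!
Observation noise adds `θ (ε_{n+1} - ε_n)` to the `n`-th increment of the observed path. This term
is centred, has second moment `2 θ²` and is independent of the increment of `y`, so it raises the
expected squared increment by exactly `2 θ²`; after the normalisation `1 / (2 N δ) = 1 / (2 T)` the
estimator gains `θ² N / T`, which diverges since `E[K_{N,T/N}] ≥ 0`.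

The only delicate point is measurability: `W₁` is measurable only at each fixed time, so
`ω ↦ y(t)(ω)` is not obviously measurable. Replacing `W₁ s` in the drift by its limsup along the
countable grids `⌊s (k + 1)⌋ / (k + 1)` changes nothing on continuous paths, i.e. almost surely, and
yields a version of `y` that is jointly measurable in time and measurable for `σ(W₁, W₂)`, which is
what the independence from the noise refers to.
-/

section Moments

variable {Ω : Type*} {mΩ : MeasurableSpace Ω} {P : Measure Ω}

abbrev generatedSigma {ι : Type*} (X : ι → Ω → ℝ) : MeasurableSpace Ω :=
  ⨆ i, MeasurableSpace.comap (X i) inferInstance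

lemma measurable_generatedSigma {ι : Type*} (X : ι → Ω → ℝ) (i : ι) :
    Measurable[generatedSigma X] (X i) :=
  measurable_iff_comap_le.mpr (le_iSup (fun i => MeasurableSpace.comap (X i) inferInstance) i)

lemma memLp_of_hasLaw_gaussianReal {X : Ω → ℝ} {μ : ℝ} {v : ℝ≥0}
    (hX : HasLaw X (gaussianReal μ v) P) (p : ℝ≥0) : MemLp X p P := by
  have h := memLp_id_gaussianReal (μ := μ) (v := v) p
  rw [← hX.map_eq] at h
  exact h.comp_of_map hX.aemeasurable

lemma integral_sq_of_hasLaw_gaussianReal [IsProbabilityMeasure P] {X : Ω → ℝ} {μ : ℝ}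
    {v : ℝ≥0} (hX : HasLaw X (gaussianReal μ v) P) : ∫ ω, X ω ^ 2 ∂P = μ ^ 2 + v := by
  have hvar := variance_eq_sub (memLp_of_hasLaw_gaussianReal hX 2)
  rw [hX.variance_eq, variance_id_gaussianReal, hX.integral_eq, integral_id_gaussianReal] at hvar
  simp only [Pi.pow_apply] at hvar
  linarith

lemma integral_add_sq_of_indepFun [IsFiniteMeasure P] {X Y : Ω → ℝ} (hXY : IndepFun X Y P)
    (hX : MemLp X 2 P) (hY : MemLp Y 2 P) (hY0 : P[Y] = 0) :
    ∫ ω, (X ω + Y ω) ^ 2 ∂P = ∫ ω, X ω ^ 2 ∂P + ∫ ω, Y ω ^ 2 ∂P := by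
  have hcross : ∫ ω, X ω * Y ω ∂P = 0 := by
    rw [hXY.integral_fun_mul_eq_mul_integral hX.1 hY.1, hY0, mul_zero]
  have hmul : Integrable (fun ω => 2 * (X ω * Y ω)) P := (hX.integrable_mul hY).const_mul 2
  calc ∫ ω, (X ω + Y ω) ^ 2 ∂P = ∫ ω, (X ω ^ 2 + 2 * (X ω * Y ω)) + Y ω ^ 2 ∂P := by
        congr with ω; ring
    _ = ∫ ω, X ω ^ 2 ∂P + ∫ ω, Y ω ^ 2 ∂P := by
        have hsum : Integrable (fun ω => X ω ^ 2 + 2 * (X ω * Y ω)) P :=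
          hX.integrable_sq.add hmul
        rw [integral_add hsum hY.integrable_sq, integral_add hX.integrable_sq hmul,
          integral_const_mul, hcross]
        ring

end Moments

section NoisyIncrements

variable {Ω : Type*} {mΩ : MeasurableSpace Ω} {P : Measure Ω} [IsProbabilityMeasure P]

lemma integral_sq_sub_of_iIndepFun {N : ℕ} {ε : Fin (N + 1) → Ω → ℝ} (hεiid : iIndepFun ε P)
    (hε : ∀ i, MemLp (ε i) 2 P) (hε0 : ∀ i, P[ε i] = 0) (hε1 : ∀ i, ∫ ω, ε i ω ^ 2 ∂P = 1)
    {i j : Fin (N + 1)} (hij : i ≠ j) : ∫ ω, (ε i ω - ε j ω) ^ 2 ∂P = 2 := by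
  have hind : IndepFun (ε i) (fun ω => -ε j ω) P :=
    (hεiid.indepFun hij).comp measurable_id measurable_neg
  simp_rw [sub_eq_add_neg]
  rw [integral_add_sq_of_indepFun hind (hε i) (hε j).neg (by rw [integral_neg, hε0, neg_zero])]
  simp only [neg_sq, hε1]
  norm_num

lemma integral_sum_sq_add_noise_increments {m : MeasurableSpace Ω} {N : ℕ} {x : ℕ → Ω → ℝ}
    (hxm : ∀ n, Measurable[m] (x n)) (hx : ∀ n, MemLp (x n) 2 P) {ε : Fin (N + 1) → Ω → ℝ}
    (hεiid : iIndepFun ε P) (hε : ∀ i, MemLp (ε i) 2 P) (hε0 : ∀ i, P[ε i] = 0)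
    (hε1 : ∀ i, ∫ ω, ε i ω ^ 2 ∂P = 1) (hεx : Indep (generatedSigma ε) m P) (θ : ℝ) :
    ∫ ω, ∑ n : Fin N, ((x (n + 1) ω + θ * ε n.succ ω) - (x n ω + θ * ε n.castSucc ω)) ^ 2 ∂P
      = ∫ ω, ∑ n ∈ Finset.range N, (x (n + 1) ω - x n ω) ^ 2 ∂P + 2 * N * θ ^ 2 := by
  have hterm : ∀ n : Fin N,
      ∫ ω, ((x (n + 1) ω + θ * ε n.succ ω) - (x n ω + θ * ε n.castSucc ω)) ^ 2 ∂P
        = ∫ ω, (x (n + 1) ω - x n ω) ^ 2 ∂P + 2 * θ ^ 2 := by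
    intro n
    have hind : IndepFun (fun ω => x (n + 1) ω - x n ω)
        (fun ω => θ * (ε n.succ ω - ε n.castSucc ω)) P := by
      rw [IndepFun_iff_Indep]
      exact indep_of_indep_of_le_right (indep_of_indep_of_le_left hεx.symm
        (measurable_iff_comap_le.mp ((hxm _).sub (hxm _))))
        (measurable_iff_comap_le.mp
          (((measurable_generatedSigma ε _).sub (measurable_generatedSigma ε _)).const_mul θ))
    have hmean : ∫ ω, θ * (ε n.succ ω - ε n.castSucc ω) ∂P = 0 := by
      rw [integral_const_mul,
        integral_sub ((hε _).integrable one_le_two) ((hε _).integrable one_le_two), hε0, hε0]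
      ring
    calc ∫ ω, ((x (n + 1) ω + θ * ε n.succ ω) - (x n ω + θ * ε n.castSucc ω)) ^ 2 ∂P
        = ∫ ω, ((x (n + 1) ω - x n ω) + θ * (ε n.succ ω - ε n.castSucc ω)) ^ 2 ∂P := by
          congr with ω; ring
      _ = ∫ ω, (x (n + 1) ω - x n ω) ^ 2 ∂P
            + θ ^ 2 * ∫ ω, (ε n.succ ω - ε n.castSucc ω) ^ 2 ∂P := by
          rw [integral_add_sq_of_indepFun hind ((hx _).sub (hx _))
            (((hε _).sub (hε _)).const_mul θ) hmean, ← integral_const_mul]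
          simp only [mul_pow]
      _ = ∫ ω, (x (n + 1) ω - x n ω) ^ 2 ∂P + 2 * θ ^ 2 := by
          rw [integral_sq_sub_of_iIndepFun hεiid hε hε0 hε1 Fin.castSucc_lt_succ.ne']
          ring
  rw [integral_finsetSum _ fun n _ => by
      exact (((hx _).add ((hε _).const_mul θ)).sub ((hx _).add ((hε _).const_mul θ))).integrable_sq,
    integral_finsetSum _ fun n _ => by exact ((hx _).sub (hx _)).integrable_sq]
  simp only [hterm, Finset.sum_add_distrib, Finset.sum_const, Finset.card_univ, Fintype.card_fin,
    nsmul_eq_mul]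
  rw [Fin.sum_univ_eq_sum_range (fun n => ∫ ω, (x (n + 1) ω - x n ω) ^ 2 ∂P)]
  ring

end NoisyIncrements

section GridLimsup

variable {Ω : Type*}

noncomputable def gridFloor (k : ℕ) (s : ℝ) : ℝ := ⌊s * (k + 1)⌋ / (k + 1)

lemma tendsto_gridFloor (s : ℝ) : Tendsto (fun k : ℕ => gridFloor k s) atTop (𝓝 s) := by
  have hdist : ∀ k : ℕ, dist (gridFloor k s) s ≤ 1 / ((k : ℝ) + 1) := by
    intro k
    have hk : (0 : ℝ) < k + 1 := by positivity
    have hsub : gridFloor k s - s = (⌊s * (k + 1)⌋ - s * (k + 1)) / (k + 1) := by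
      rw [gridFloor]
      field_simp
    rw [Real.dist_eq, hsub, abs_div, abs_of_pos hk]
    gcongr
    rw [abs_le]
    constructor <;> linarith [Int.floor_le (s * (k + 1)), Int.lt_floor_add_one (s * (k + 1))]
  exact tendsto_iff_dist_tendsto_zero.mpr
    (squeeze_zero (fun _ => dist_nonneg) hdist tendsto_one_div_add_atTop_nhds_zero_nat)

noncomputable def gridLimsup (W : ℝ → Ω → ℝ) (s : ℝ) (ω : Ω) : ℝ :=
  limsup (fun k : ℕ => W (gridFloor k s) ω) atTop

lemma gridLimsup_eq_of_continuous {W : ℝ → Ω → ℝ} {ω : Ω} (hω : Continuous fun t => W t ω)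
    (s : ℝ) : gridLimsup W s ω = W s ω :=
  ((hω.tendsto s).comp (tendsto_gridFloor s)).limsup_eq

variable {mΩ : MeasurableSpace Ω}

lemma measurable_gridLimsup {W : ℝ → Ω → ℝ} (hW : ∀ t, Measurable (W t)) :
    Measurable fun p : ℝ × Ω => gridLimsup W p.1 p.2 := by
  refine Measurable.limsup fun k => ?_
  have hgrid : Measurable fun q : Ω × ℤ => W (q.2 / (k + 1)) q.1 :=
    measurable_from_prod_countable_left fun z => hW ((z : ℝ) / (k + 1))
  exact hgrid.comp (measurable_snd.prodMk
    (((measurable_id.mul_const _).floor).comp measurable_fst))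

lemma measurable_integral_comp_gridLimsup {W : ℝ → Ω → ℝ} (hW : ∀ t, Measurable (W t))
    {f : ℝ → ℝ} (hf : Measurable f) (μ : Measure ℝ) [SFinite μ] :
    Measurable fun ω => ∫ s, f (gridLimsup W s ω) ∂μ :=
  (((hf.comp (measurable_gridLimsup hW)).comp measurable_swap).stronglyMeasurable
    |>.integral_prod_right' (ν := μ)).measurable

end GridLimsup

section Displacement

variable {Ω : Type} {mΩ : MeasurableSpace Ω} {P : Measure Ω}

lemma IsStdBM.hasLaw_sub {W : ℝ → Ω → ℝ} (hW : IsStdBM P W) {s t : ℝ} (hs : 0 ≤ s) (hst : s ≤ t) :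
    HasLaw (fun ω => W t ω - W s ω) (gaussianReal 0 (t - s).toNNReal) P :=
  ⟨((hW.meas t).sub (hW.meas s)).aemeasurable, hW.gaussIncr s t hs hst⟩

lemma IsStdBM.memLp {W : ℝ → Ω → ℝ} (hW : IsStdBM P W) {t : ℝ} (ht : 0 ≤ t) (p : ℝ≥0) :
    MemLp (W t) p P :=
  (memLp_of_hasLaw_gaussianReal (hW.hasLaw_sub le_rfl ht) p).ae_eq
    (hW.init.mono fun ω h0 => by simp only [h0, sub_zero])

noncomputable def dispMod (κ : ℝ) (W₁ W₂ : ℝ → Ω → ℝ) (t : ℝ) (ω : Ω) : ℝ :=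
  (∫ s in Set.Ioc 0 t, Real.sin (√(2 * κ) * gridLimsup W₁ s ω)) + √(2 * κ) * W₂ t ω

lemma disp_eq_dispMod {κ : ℝ} {W₁ W₂ : ℝ → Ω → ℝ} {ω : Ω} (hω : Continuous fun t => W₁ t ω)
    {t : ℝ} (ht : 0 ≤ t) : disp κ W₁ W₂ t ω = dispMod κ W₁ W₂ t ω := by
  simp only [disp, dispMod, intervalIntegral.integral_of_le ht, gridLimsup_eq_of_continuous hω]

lemma measurable_dispMod (κ : ℝ) (W₁ W₂ : ℝ → Ω → ℝ) (t : ℝ) :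
    Measurable[generatedSigma W₁ ⊔ generatedSigma W₂] (dispMod κ W₁ W₂ t) := by
  have hdrift := measurable_integral_comp_gridLimsup (mΩ := generatedSigma W₁)
    (measurable_generatedSigma W₁) (by fun_prop : Measurable fun x => Real.sin (√(2 * κ) * x))
    (volume.restrict (Set.Ioc 0 t))
  exact (hdrift.mono le_sup_left le_rfl).add
    (((measurable_generatedSigma W₂ t).mono le_sup_right le_rfl).const_mul _)

lemma memLp_dispMod [IsFiniteMeasure P] (κ : ℝ) {W₁ W₂ : ℝ → Ω → ℝ}
    (hW₁ : ∀ t, Measurable (W₁ t)) (hW₂ : IsStdBM P W₂) {t : ℝ} (ht : 0 ≤ t) :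
    MemLp (dispMod κ W₁ W₂ t) 2 P := by
  have hdrift :
      MemLp (fun ω => ∫ s in Set.Ioc 0 t, Real.sin (√(2 * κ) * gridLimsup W₁ s ω)) 2 P := by
    refine MemLp.of_bound (measurable_integral_comp_gridLimsup hW₁
      (by fun_prop : Measurable fun x => Real.sin (√(2 * κ) * x)) _).aestronglyMeasurable
      t (ae_of_all _ fun ω => ?_)
    have h := norm_setIntegral_le_of_norm_le_const (C := 1) (s := Set.Ioc 0 t) (μ := volume)
      (f := fun s => Real.sin (√(2 * κ) * gridLimsup W₁ s ω)) measure_Ioc_lt_top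
      (fun s _ => by simpa using Real.abs_sin_le_one _)
    rwa [Real.volume_real_Ioc_of_le ht, one_mul, sub_zero] at h
  exact hdrift.add ((hW₂.memLp ht 2).const_mul _)

end Displacement

lemma noisyQVMean_eq_integral_qv_add {Ω : Type} [MeasurableSpace Ω] {P : Measure Ω}
    [IsProbabilityMeasure P] {W₁ W₂ : ℝ → Ω → ℝ} (hW₁ : IsStdBM P W₁) (hW₂ : IsStdBM P W₂)
    (κ θ : ℝ) {T : ℝ} (hT : 0 < T) (ε : (N : ℕ) → Fin (N + 1) → Ω → ℝ) {N : ℕ} (hN : 1 ≤ N)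
    (hε : ∀ i, HasLaw (ε N i) (gaussianReal 0 1) P) (hεiid : iIndepFun (ε N) P)
    (hεW : Indep (generatedSigma (ε N)) (generatedSigma W₁ ⊔ generatedSigma W₂) P) :
    noisyQVMean P W₁ W₂ κ T θ ε N = ∫ ω, qv κ W₁ W₂ N (T / N) ω ∂P + θ ^ 2 * N / T := by
  have hNpos : (0 : ℝ) < N := by exact_mod_cast hN
  have hgrid : ∀ n : ℕ, 0 ≤ (n : ℝ) * (T / N) := fun n => by positivity
  set x : ℕ → Ω → ℝ := fun n => dispMod κ W₁ W₂ (n * (T / N))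
  have hdisp : ∀ᵐ ω ∂P, ∀ n : ℕ, disp κ W₁ W₂ (n * (T / N)) ω = x n ω :=
    hW₁.cont.mono fun ω hω n => disp_eq_dispMod hω (hgrid n)
  have hnoisy : noisyQVMean P W₁ W₂ κ T θ ε N = 1 / (2 * N * (T / N)) *
      ∫ ω, ∑ n : Fin N,
        ((x (n + 1) ω + θ * ε N n.succ ω) - (x n ω + θ * ε N n.castSucc ω)) ^ 2 ∂P := by
    rw [noisyQVMean, ← integral_const_mul]
    refine integral_congr_ae (hdisp.mono fun ω hω => ?_)
    simp only [hω, Fin.val_succ, Fin.val_castSucc]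
  have hqv : ∫ ω, qv κ W₁ W₂ N (T / N) ω ∂P = 1 / (2 * N * (T / N)) *
      ∫ ω, ∑ n ∈ Finset.range N, (x (n + 1) ω - x n ω) ^ 2 ∂P := by
    rw [← integral_const_mul]
    refine integral_congr_ae (hdisp.mono fun ω hω => ?_)
    simp only [qv, ← Nat.cast_succ, hω]
  have hε0 : ∀ i, P[ε N i] = 0 := fun i => by rw [(hε i).integral_eq, integral_id_gaussianReal]
  have hε1 : ∀ i, ∫ ω, ε N i ω ^ 2 ∂P = 1 := fun i => by
    rw [integral_sq_of_hasLaw_gaussianReal (hε i)]; norm_num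
  rw [hnoisy, hqv, integral_sum_sq_add_noise_increments (fun n => measurable_dispMod κ W₁ W₂ _)
    (fun n => memLp_dispMod κ hW₁.meas hW₂ (hgrid n)) hεiid
    (fun i => memLp_of_hasLaw_gaussianReal (hε i) 2) hε0 hε1 hεW θ, mul_add]
  congr 1
  field_simp

lemma qv_nonneg {Ω : Type} (κ : ℝ) (W₁ W₂ : ℝ → Ω → ℝ) (N : ℕ) {δ : ℝ} (hδ : 0 ≤ δ) (ω : Ω) :
    0 ≤ qv κ W₁ W₂ N δ ω :=
  mul_nonneg (by positivity) (Finset.sum_nonneg fun _ _ => sq_nonneg _)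

theorem noisy_qv_diverges_general
    {Ω : Type} [MeasurableSpace Ω] (P : Measure Ω) [IsProbabilityMeasure P]
    (W₁ W₂ : ℝ → Ω → ℝ) (hW₁ : IsStdBM P W₁) (hW₂ : IsStdBM P W₂)
    (κ T θ : ℝ) (hT : 0 < T) (hθ : 0 < θ)
    (ε : (N : ℕ) → Fin (N + 1) → Ω → ℝ)
    (hεmeas : ∀ N i, Measurable (ε N i))
    (hεlaw : ∀ N i, P.map (ε N i) = gaussianReal 0 1)
    (hεiid : ∀ N, iIndepFun (ε N) P)
    (hεW : ∀ N, Indep (⨆ i, MeasurableSpace.comap (ε N i) inferInstance)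
        ((⨆ t : ℝ, MeasurableSpace.comap (W₁ t) inferInstance)
          ⊔ (⨆ t : ℝ, MeasurableSpace.comap (W₂ t) inferInstance)) P) :
    (∀ N : ℕ, 1 ≤ N →
      noisyQVMean P W₁ W₂ κ T θ ε N =
        (∫ ω, qv κ W₁ W₂ N (T / N) ω ∂P) + θ ^ 2 * N / T) ∧
    Tendsto (noisyQVMean P W₁ W₂ κ T θ ε) atTop atTop := by
  have hmean : ∀ N : ℕ, 1 ≤ N → noisyQVMean P W₁ W₂ κ T θ ε N =
      (∫ ω, qv κ W₁ W₂ N (T / N) ω ∂P) + θ ^ 2 * N / T := fun N hN =>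
    noisyQVMean_eq_integral_qv_add hW₁ hW₂ κ θ hT ε hN
      (fun i => ⟨(hεmeas N i).aemeasurable, hεlaw N i⟩) (hεiid N) (hεW N)
  have hnoise : Tendsto (fun N : ℕ => θ ^ 2 * N / T) atTop atTop :=
    (tendsto_natCast_atTop_atTop.const_mul_atTop (pow_pos hθ 2)).atTop_div_const hT
  refine ⟨hmean, tendsto_atTop_mono' atTop ?_ hnoise⟩
  filter_upwards [eventually_ge_atTop 1] with N hN
  rw [hmean N hN, le_add_iff_nonneg_left]
  exact integral_nonneg (qv_nonneg κ W₁ W₂ N (by positivity))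

/-- with observation noise the expectation of the quadratic-variation
estimator equals `E[K_{N,T/N}] + θ² N / T`, and it diverges in the fine-sampling limit. -/
theorem noisy_qv_diverges
    {Ω : Type} [MeasurableSpace Ω] (P : Measure Ω) [IsProbabilityMeasure P]
    (W₁ W₂ : ℝ → Ω → ℝ) (hW₁ : IsStdBM P W₁) (hW₂ : IsStdBM P W₂)
    (hInd : ProcIndep P W₁ W₂)
    (κ T θ : ℝ) (hκ : 0 < κ) (hT : 0 < T) (hθ : 0 < θ)
    (ε : (N : ℕ) → Fin (N + 1) → Ω → ℝ)
    (hεmeas : ∀ N i, Measurable (ε N i))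
    (hεlaw : ∀ N i, P.map (ε N i) = gaussianReal 0 1)
    (hεiid : ∀ N, iIndepFun (ε N) P)
    (hεW : ∀ N, Indep (⨆ i, MeasurableSpace.comap (ε N i) inferInstance)
        ((⨆ t : ℝ, MeasurableSpace.comap (W₁ t) inferInstance)
          ⊔ (⨆ t : ℝ, MeasurableSpace.comap (W₂ t) inferInstance)) P) :
    (∀ N : ℕ, 1 ≤ N →
      noisyQVMean P W₁ W₂ κ T θ ε N =
        (∫ ω, qv κ W₁ W₂ N (T / N) ω ∂P) + θ ^ 2 * N / T) ∧
    Tendsto (noisyQVMean P W₁ W₂ κ T θ ε) atTop atTop :=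
  noisy_qv_diverges_general P W₁ W₂ hW₁ hW₂ κ T θ hT hθ ε hεmeas hεlaw hεiid hεW
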